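/- arXiv:1609.02086 — 2 statements merged into one kernel-verified Lean document; each statement's English description precedes it below -/
import Mathlib

section
/- Let M be an interval persistence module over a poset P with underlying interval I, and let N be an interval module with underlying interval J. If χ: M → N is a morphism of persistence modules and A = I ∩ J is an interval, then for all a, b ∈ A, the linear maps χ_a and χ_b are equal as k-endomorphisms (i.e., they are multiplication by the same scalar). -/
open CategoryTheory Classical

noncomputable section

/-- Convexity of a subset of a poset. -/
def IsConvex {P : Type} [Preorder P] (I : Set P) : Prop :=
  ∀ ⦃p q r : P⦄, p ∈ I → q ∈ I → p ≤ r → r ≤ q → r ∈ I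

/-- Zigzag connectivity within a subset. -/
def ZigzagConnected {P : Type} [Preorder P] (I : Set P) : Prop :=
  ∀ p ∈ I, ∀ q ∈ I,
    Relation.ReflTransGen (fun a b => a ∈ I ∧ b ∈ I ∧ (a ≤ b ∨ b ≤ a)) p q

/-- An interval in a poset: nonempty, convex, and zigzag connected. -/
def IsIntervalSet {P : Type} [Preorder P] (I : Set P) : Prop :=
  I.Nonempty ∧ IsConvex I ∧ ZigzagConnected I

open scoped Classical in
/-- The pointwise vector space of the interval module: `k` (as `⊤`) on `I`, `0` off `I`. -/
def objSub (k : Type) [Field k] {P : Type} [Preorder P] (I : Set P) (p : P) : Submodule k k :=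
  if p ∈ I then ⊤ else ⊥

open scoped Classical in
/-- The interval persistence module `𝕀^I` as a functor `P ⥤ ModuleCat k`. -/
def intervalModule (k : Type) [Field k] {P : Type} [Preorder P] (I : Set P)
    (hI : IsConvex I) : P ⥤ ModuleCat.{0} k where
  obj p := ModuleCat.of k (objSub k I p)
  map {p q} h :=
    if hpq : p ∈ I ∧ q ∈ I then
      ModuleCat.ofHom
        { toFun := fun x => ⟨(x : k), by simp [objSub, hpq.2]⟩
          map_add' := by intros; rfl
          map_smul' := by intros; rfl }
    else 0
  map_id := by
    intro p
    try dsimp only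
    by_cases hp : p ∈ I
    · rw [dif_pos ⟨hp, hp⟩]; rfl
    · rw [dif_neg (fun h => hp h.1)]
      haveI : Subsingleton ↥(objSub k I p) := by
        rw [objSub, if_neg hp]; infer_instance
      apply ModuleCat.hom_ext; apply LinearMap.ext; intro x
      exact this.allEq _ _
  map_comp := by
    intro p q r hpq hqr
    try dsimp only
    by_cases hpr : p ∈ I ∧ r ∈ I
    · have hq : q ∈ I := hI hpr.1 hpr.2 (leOfHom hpq) (leOfHom hqr)
      rw [dif_pos hpr, dif_pos ⟨hpr.1, hq⟩, dif_pos ⟨hq, hpr.2⟩]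
      rfl
    · rw [dif_neg hpr]
      by_cases hp : p ∈ I
      · have hr : r ∉ I := fun hr => hpr ⟨hp, hr⟩
        haveI : Subsingleton ↥(objSub k I r) := by
          rw [objSub, if_neg hr]; infer_instance
        apply ModuleCat.hom_ext; apply LinearMap.ext; intro x
        exact this.allEq _ _
      · haveI : Subsingleton ↥(objSub k I p) := by
          rw [objSub, if_neg hp]; infer_instance
        apply ModuleCat.hom_ext; apply LinearMap.ext; intro x
        have hx : x = 0 := this.allEq x 0
        rw [hx]
        simp


/-- The scalar value of an element of an interval module at a point. -/
def imVal (k : Type) [Field k] {P : Type} [Preorder P] {I : Set P} {hI : IsConvex I}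
    {p : P} (x : ((intervalModule k I hI).obj p : Type)) : k := x.1

/-! On a comparable pair `p ≤ q` in `I ∩ J` both structure maps are the identity of `k`, so
naturality of `χ` gives `χ_p = χ_q`; zigzag connectivity of `I ∩ J` chains such pairs between
any two of its points. -/

theorem ZigzagConnected.constant {P : Type} [Preorder P] {S : Set P} (hS : ZigzagConnected S)
    {α : Type*} (f : S → α) (hf : ∀ p q : S, p ≤ q → f p = f q) (p q : S) : f p = f q := by
  have key : ∀ {r : P},
      Relation.ReflTransGen (fun a b => a ∈ S ∧ b ∈ S ∧ (a ≤ b ∨ b ≤ a)) p r →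
      ∀ hr : r ∈ S, f p = f ⟨r, hr⟩ := by
    intro r hpr
    induction hpr with
    | refl => intro _; rfl
    | tail _ hstep ih =>
      obtain ⟨hu, -, hle | hle⟩ := hstep
      · exact fun _ => (ih hu).trans (hf _ _ hle)
      · exact fun _ => (ih hu).trans (hf _ _ hle).symm
  exact key (hS p p.2 q q.2) q.2

theorem imVal_intervalModule_map {k : Type} [Field k] {P : Type} [Preorder P] {I : Set P}
    (hI : IsConvex I) {p q : P} (f : p ⟶ q) (hp : p ∈ I) (hq : q ∈ I)
    (y : (intervalModule k I hI).obj p) :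
    imVal k ((intervalModule k I hI).map f y) = imVal k y := by
  simp only [intervalModule, dif_pos (And.intro hp hq)]
  rfl

theorem imVal_app_map {k : Type} [Field k] {P : Type} [Preorder P] {I J : Set P}
    {hI : IsConvex I} (hJ : IsConvex J)
    (χ : intervalModule k I hI ⟶ intervalModule k J hJ) {p q : P} (f : p ⟶ q)
    (hp : p ∈ J) (hq : q ∈ J) (y : (intervalModule k I hI).obj p) :
    imVal k (χ.app q ((intervalModule k I hI).map f y)) = imVal k (χ.app p y) := by
  rw [← ModuleCat.comp_apply, χ.naturality, ModuleCat.comp_apply,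
    imVal_intervalModule_map hJ f hp hq]

/-- If `M = 𝕀^I` and `N = 𝕀^J` are interval modules over a poset `P`,
`χ : M ⟶ N` is a morphism of persistence modules, and `A = I ∩ J` is an interval,
then for all `a, b ∈ A` the components `χ_a` and `χ_b` agree as `k`-endomorphisms
(they are multiplication by the same scalar). -/
theorem interval_morphism_constant_scalar
    (k : Type) [Field k] {P : Type} [PartialOrder P]
    (I J : Set P) (hI : IsIntervalSet I) (hJ : IsIntervalSet J)
    (hA : IsIntervalSet (I ∩ J))
    (χ : intervalModule k I hI.2.1 ⟶ intervalModule k J hJ.2.1)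
    (a b : P) (ha : a ∈ I ∩ J) (hb : b ∈ I ∩ J) (x : k) :
    imVal k (χ.app a ⟨x, by simp [objSub, ha.1]⟩) =
      imVal k (χ.app b ⟨x, by simp [objSub, hb.1]⟩) := by
  let scalar : ↥(I ∩ J) → k := fun p => imVal k (χ.app p ⟨x, by simp [objSub, p.2.1]⟩)
  refine hA.2.2.constant scalar (fun p q hpq => ?_) ⟨a, ha⟩ ⟨b, hb⟩
  have hmap : (intervalModule k I hI.2.1).map (homOfLE hpq) ⟨x, by simp [objSub, p.2.1]⟩ =
      ⟨x, by simp [objSub, q.2.1]⟩ :=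
    Subtype.ext (imVal_intervalModule_map hI.2.1 _ p.2.1 q.2.1 _)
  simp only [scalar, ← hmap]
  exact (imVal_app_map hJ.2.1 χ (homOfLE hpq) p.2.2 q.2.2 _).symm
end
end

section
/- Let R and S be rectangles in ℝ^n (products of real intervals), and let χ: 𝕀^R → 𝕀^S be a nonzero morphism of persistence modules. Then for every coordinate i, the infimum of S_i is at most the infimum of R_i and the supremum of S_i is at most the supremum of R_i, with the corresponding comparisons of endpoint inclusion when infima/suprema coincide (i.e., min_S ≤ min_R and max_S ≤ max_R as decorated points). -/
open CategoryTheory Classical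

noncomputable section

open DirectSum

open scoped ENNReal

/-- Direct sum of a family of persistence modules. -/
def dsumF (k : Type) [Field k] {P : Type} [Preorder P] {ι : Type}
    (F : ι → P ⥤ ModuleCat.{0} k) : P ⥤ ModuleCat.{0} k where
  obj p := ModuleCat.of k (⨁ i, ((F i).obj p : Type))
  map {p q} h := ModuleCat.ofHom
    (DFinsupp.mapRange.linearMap (fun i => ((F i).map h).hom))
  map_id := by
    intro p
    try dsimp only
    simp only [CategoryTheory.Functor.map_id, ModuleCat.hom_id]
    rw [DFinsupp.mapRange.linearMap_id]; rfl
  map_comp := by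
    intro p q r hpq hqr
    try dsimp only
    simp only [CategoryTheory.Functor.map_comp]
    apply ModuleCat.hom_ext; apply LinearMap.ext; intro x
    apply DFinsupp.ext; intro i
    rfl

/-- Use the preorder category structure on `Fin n → ℝ`. -/
instance RnCat (n : ℕ) : Category (Fin n → ℝ) := Preorder.smallCategory _

/-- Diagonal translation by `ε` as an endofunctor of the poset `Fin n → ℝ`. -/
def transl (n : ℕ) (ε : ℝ) : (Fin n → ℝ) ⥤ (Fin n → ℝ) :=
  Monotone.functor (f := fun p i => p i + ε)
    (fun _ _ hab i => add_le_add (hab i) le_rfl)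

/-- `M` and `N` are `ε`-interleaved `ℝⁿ`-persistence modules. -/
def Interleaved (k : Type) [Field k] {n : ℕ} (ε : ℝ)
    (M N : (Fin n → ℝ) ⥤ ModuleCat.{0} k) : Prop :=
  ∃ _hε : 0 ≤ ε, ∃ (f : M ⟶ transl n ε ⋙ N) (g : N ⟶ transl n ε ⋙ M),
    (∀ p : Fin n → ℝ, f.app p ≫ g.app (fun i => p i + ε) =
      M.map (homOfLE (show p ≤ fun i => p i + ε + ε from
        fun i => by show p i ≤ p i + ε + ε; linarith))) ∧
    (∀ p : Fin n → ℝ, g.app p ≫ f.app (fun i => p i + ε) =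
      N.map (homOfLE (show p ≤ fun i => p i + ε + ε from
        fun i => by show p i ≤ p i + ε + ε; linarith)))

/-- An interval `I ⊆ ℝⁿ` is `δ`-trivial: it contains no pair `p ≤ p + δ`. -/
def SetTrivial {n : ℕ} (δ : ℝ) (I : Set (Fin n → ℝ)) : Prop :=
  ¬ ∃ p, p ∈ I ∧ (fun i => p i + δ) ∈ I

/-- Barcode data: an indexed family of nonempty convex intervals in `ℝⁿ`. -/
structure Barcode (n : ℕ) where
  ι : Type
  I : ι → Set (Fin n → ℝ)
  nonempty : ∀ i, (I i).Nonempty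
  conv : ∀ i, IsConvex (I i)

/-- The interval decomposable module associated to barcode data. -/
def Barcode.module (k : Type) [Field k] {n : ℕ} (B : Barcode n) :
    (Fin n → ℝ) ⥤ ModuleCat.{0} k :=
  dsumF k fun i => intervalModule k (B.I i) (B.conv i)

/-- `B` is pointwise finite dimensional. -/
def Barcode.pfd (k : Type) [Field k] {n : ℕ} (B : Barcode n) : Prop :=
  ∀ p : Fin n → ℝ, Module.Finite k ((B.module k).obj p)

/-- An `ε`-matching between two barcodes: a partial bijection such that unmatched
intervals are `2ε`-trivial and matched intervals are `ε`-interleaved. -/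
def Matched (k : Type) [Field k] {n : ℕ} (ε : ℝ) (B C : Barcode n) : Prop :=
  0 ≤ ε ∧ ∃ (A : Set B.ι) (A' : Set C.ι) (e : A ≃ A'),
    (∀ i ∉ A, SetTrivial (2 * ε) (B.I i)) ∧
    (∀ j ∉ A', SetTrivial (2 * ε) (C.I j)) ∧
    (∀ i : A, Interleaved k ε
      (intervalModule k (B.I i) (B.conv i))
      (intervalModule k (C.I (e i)) (C.conv (e i))))

/-- The interleaving distance, valued in `ℝ≥0∞`. -/
def dInt (k : Type) [Field k] {n : ℕ} (M N : (Fin n → ℝ) ⥤ ModuleCat.{0} k) : ℝ≥0∞ :=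
  ⨅ (ε : ℝ) (_ : Interleaved k ε M N), ENNReal.ofReal ε

/-- The bottleneck distance between barcodes, valued in `ℝ≥0∞`. -/
def dBot (k : Type) [Field k] {n : ℕ} (B C : Barcode n) : ℝ≥0∞ :=
  ⨅ (ε : ℝ) (_ : Matched k ε B C), ENNReal.ofReal ε

/-- Rectangles: products of real intervals. -/
def rectSet {n : ℕ} (R : Fin n → Set ℝ) : Set (Fin n → ℝ) := {x | ∀ i, x i ∈ R i}

theorem rectSet_convex {n : ℕ} (R : Fin n → Set ℝ) (h : ∀ i, (R i).OrdConnected) :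
    IsConvex (rectSet R) := by
  intro p q r hp hq hpr hrq i
  exact (h i).out (hp i) (hq i) ⟨hpr i, hrq i⟩

/-- A barcode consists of rectangles. -/
def IsRectBarcode {n : ℕ} (B : Barcode n) : Prop :=
  ∀ i, ∃ R : Fin n → Set ℝ,
    (∀ j, (R j).Nonempty ∧ (R j).OrdConnected) ∧ B.I i = rectSet R

/-- Decorated numbers: an extended real endpoint with a decoration,
`false` = `−` (closed side), `true` = `+` (open side), ordered lexicographically
so that `a⁻ < a⁺` and `a^* < b^*` whenever `a < b`. -/
def DecNum := Lex (EReal × Bool)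

noncomputable instance : LinearOrder DecNum :=
  inferInstanceAs (LinearOrder (Lex (EReal × Bool)))

open scoped Classical in
/-- The decorated lower endpoint of a subset of `ℝ`. -/
noncomputable def lowDec (I : Set ℝ) : DecNum :=
  toLex (sInf ((↑) '' I : Set EReal),
    if sInf ((↑) '' I : Set EReal) ∈ ((↑) '' I : Set EReal) then false else true)

open scoped Classical in
/-- The decorated upper endpoint of a subset of `ℝ`. -/
noncomputable def highDec (I : Set ℝ) : DecNum :=
  toLex (sSup ((↑) '' I : Set EReal),
    if sSup ((↑) '' I : Set EReal) ∈ ((↑) '' I : Set EReal) then true else false)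

/-- The decorated point `min_R` of a rectangle with factors `R`. -/
noncomputable def minDec {n : ℕ} (R : Fin n → Set ℝ) : Fin n → DecNum :=
  fun i => lowDec (R i)

/-- The decorated point `max_R` of a rectangle with factors `R`. -/
noncomputable def maxDec {n : ℕ} (R : Fin n → Set ℝ) : Fin n → DecNum :=
  fun i => highDec (R i)

/-- `u` of a decorated number: the underlying real number, `0` for `±∞`. -/
noncomputable def uDec (d : DecNum) : ℝ := (ofLex d).1.toReal

/-- `α` of a rectangle with factors `R`. -/
noncomputable def alphaR {n : ℕ} (R : Fin n → Set ℝ) : ℝ :=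
  (∑ i, uDec (minDec R i)) + (∑ i, uDec (maxDec R i))

open scoped Classical in
/-- `P` of a rectangle: the number of endpoint decorations equal to `+`. -/
noncomputable def PR {n : ℕ} (R : Fin n → Set ℝ) : ℕ :=
  (Finset.univ.filter fun i => (ofLex (minDec R i)).2 = true).card +
    (Finset.univ.filter fun i => (ofLex (maxDec R i)).2 = true).card

/-- The preorder `≤_α` on rectangles. -/
noncomputable def leAlpha {n : ℕ} (R S : Fin n → Set ℝ) : Prop :=
  alphaR R < alphaR S ∨ (alphaR R = alphaR S ∧ PR R ≤ PR S)

/-- Two rectangles are of the same type if all coordinatewise set differences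
are bounded. -/
def SameType {n : ℕ} (R S : Fin n → Set ℝ) : Prop :=
  ∀ i, Bornology.IsBounded (R i \ S i) ∧ Bornology.IsBounded (S i \ R i)

/-- `I ⊆ ℝⁿ` is `δ`-significant. -/
def SetSignificant {n : ℕ} (δ : ℝ) (I : Set (Fin n → ℝ)) : Prop :=
  ∃ p, p ∈ I ∧ (fun i => p i + δ) ∈ I

/-- Rectangle factor data: each factor is a nonempty ordered-connected real interval. -/
def IsRectFactors {n : ℕ} (R : Fin n → Set ℝ) : Prop :=
  ∀ i, (R i).Nonempty ∧ (R i).OrdConnected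

/-!
A nonzero `χ : 𝕀^R ⟶ 𝕀^S` has a component `χ_p ≠ 0`, so `p ∈ R ∩ S`. Structure maps of an
interval module between points of the interval are isomorphisms, so naturality of `χ` along
`q ≤ p` shows that every `q ≤ p` in `R` lies in `S`, and along `p ≤ q` that every `q ≥ p` in `S`
lies in `R`. Moving `p` in one coordinate turns this into: every point of `R_i` dominates a point
of `S_i`, and every point of `S_i` is dominated by a point of `R_i`; these comparisons of lower
and upper sets give the inequalities of decorated endpoints, including the decorations.
-/

section IntervalModule

variable (k : Type) [Field k] {P : Type} [Preorder P] {I : Set P} (hI : IsConvex I)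

lemma isZero_intervalModule_obj {p : P} (hp : p ∉ I) :
    Limits.IsZero ((intervalModule k I hI).obj p) := by
  have : Subsingleton (objSub k I p) := by
    rw [objSub, if_neg hp]; infer_instance
  exact @ModuleCat.isZero_of_subsingleton k _ _ this

lemma intervalModule_map_coe {p q : P} (f : p ⟶ q) (hp : p ∈ I) (hq : q ∈ I)
    (x : objSub k I p) : (((intervalModule k I hI).map f) x).1 = x.1 := by
  simp only [intervalModule, dif_pos (And.intro hp hq)]
  rfl

lemma mono_intervalModule_map {p q : P} (f : p ⟶ q) (hp : p ∈ I) (hq : q ∈ I) :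
    Mono ((intervalModule k I hI).map f) :=
  (ModuleCat.mono_iff_injective _).2 fun x y hxy => Subtype.ext <| by
    rw [← intervalModule_map_coe k hI f hp hq x, ← intervalModule_map_coe k hI f hp hq y, hxy]

lemma epi_intervalModule_map {p q : P} (f : p ⟶ q) (hp : p ∈ I) (hq : q ∈ I) :
    Epi ((intervalModule k I hI).map f) := by
  refine (ModuleCat.epi_iff_surjective _).2 fun y => ?_
  have hy : y.1 ∈ objSub k I p := by rw [objSub, if_pos hp]; trivial
  exact ⟨⟨y.1, hy⟩, Subtype.ext (intervalModule_map_coe k hI f hp hq _)⟩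

end IntervalModule

section IntervalModuleMorphism

variable {k : Type} [Field k] {P : Type} [Preorder P] {I J : Set P} {hI : IsConvex I}
  {hJ : IsConvex J} (χ : intervalModule k I hI ⟶ intervalModule k J hJ) {p : P}

lemma mem_source_of_app_ne_zero (hχp : χ.app p ≠ 0) : p ∈ I := by
  by_contra hp
  exact hχp ((isZero_intervalModule_obj k hI hp).eq_of_src _ _)

lemma mem_target_of_app_ne_zero (hχp : χ.app p ≠ 0) : p ∈ J := by
  by_contra hp
  exact hχp ((isZero_intervalModule_obj k hJ hp).eq_of_tgt _ _)

lemma mem_target_of_le_of_app_ne_zero (hχp : χ.app p ≠ 0) {q : P} (hqp : q ≤ p)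
    (hq : q ∈ I) : q ∈ J := by
  by_contra hqJ
  have := epi_intervalModule_map k hI (homOfLE hqp) hq (mem_source_of_app_ne_zero χ hχp)
  have hcomp := χ.naturality (homOfLE hqp)
  rw [(isZero_intervalModule_obj k hJ hqJ).eq_of_tgt (χ.app q) 0, Limits.zero_comp,
    ← Limits.comp_zero] at hcomp
  exact hχp ((cancel_epi _).1 hcomp)

lemma mem_source_of_le_of_app_ne_zero (hχp : χ.app p ≠ 0) {q : P} (hpq : p ≤ q)
    (hq : q ∈ J) : q ∈ I := by
  by_contra hqI
  have := mono_intervalModule_map k hJ (homOfLE hpq) (mem_target_of_app_ne_zero χ hχp) hq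
  have hcomp := χ.naturality (homOfLE hpq)
  rw [(isZero_intervalModule_obj k hI hqI).eq_of_tgt ((intervalModule k I hI).map _) 0,
    Limits.zero_comp, ← Limits.zero_comp] at hcomp
  exact hχp ((cancel_mono _).1 hcomp.symm)

end IntervalModuleMorphism

lemma lowDec_le_lowDec {A B : Set ℝ} (h : ∀ a ∈ A, ∃ b ∈ B, b ≤ a) :
    lowDec B ≤ lowDec A := by
  have hle : sInf ((↑) '' B : Set EReal) ≤ sInf ((↑) '' A : Set EReal) := by
    refine le_sInf (Set.forall_mem_image.2 fun a ha => ?_)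
    obtain ⟨b, hb, hba⟩ := h a ha
    exact (sInf_le (Set.mem_image_of_mem _ hb)).trans (EReal.coe_le_coe_iff.2 hba)
  refine Prod.Lex.toLex_le_toLex'.2 ⟨hle, fun heq => ?_⟩
  dsimp only at heq ⊢
  by_cases hA : sInf ((↑) '' A : Set EReal) ∈ ((↑) '' A : Set EReal)
  · obtain ⟨a, ha, hav⟩ := id hA
    obtain ⟨b, hb, hba⟩ := h a ha
    have hB : sInf ((↑) '' B : Set EReal) ∈ ((↑) '' B : Set EReal) := by
      refine ⟨b, hb, le_antisymm ?_ (sInf_le (Set.mem_image_of_mem _ hb))⟩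
      rw [heq, ← hav]
      exact EReal.coe_le_coe_iff.2 hba
    simp only [hA, hB, if_true, le_refl]
  · simp only [hA, if_false, Bool.le_true]

lemma highDec_le_highDec {A B : Set ℝ} (h : ∀ b ∈ B, ∃ a ∈ A, b ≤ a) :
    highDec B ≤ highDec A := by
  have hle : sSup ((↑) '' B : Set EReal) ≤ sSup ((↑) '' A : Set EReal) := by
    refine sSup_le (Set.forall_mem_image.2 fun b hb => ?_)
    obtain ⟨a, ha, hba⟩ := h b hb
    exact (EReal.coe_le_coe_iff.2 hba).trans (le_sSup (Set.mem_image_of_mem _ ha))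
  refine Prod.Lex.toLex_le_toLex'.2 ⟨hle, fun heq => ?_⟩
  dsimp only at heq ⊢
  by_cases hB : sSup ((↑) '' B : Set EReal) ∈ ((↑) '' B : Set EReal)
  · obtain ⟨b, hb, hbv⟩ := id hB
    obtain ⟨a, ha, hba⟩ := h b hb
    have hA : sSup ((↑) '' A : Set EReal) ∈ ((↑) '' A : Set EReal) := by
      refine ⟨a, ha, le_antisymm (le_sSup (Set.mem_image_of_mem _ ha)) ?_⟩
      rw [← heq, ← hbv]
      exact EReal.coe_le_coe_iff.2 hba
    simp only [hA, hB, if_true, le_refl]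
  · simp only [hB, if_false, Bool.false_le]

lemma update_mem_rectSet {n : ℕ} {R : Fin n → Set ℝ} {p : Fin n → ℝ} (hp : p ∈ rectSet R)
    {i : Fin n} {a : ℝ} (ha : a ∈ R i) : Function.update p i a ∈ rectSet R := by
  intro j
  rcases eq_or_ne j i with rfl | hj
  · simpa using ha
  · simpa [hj] using hp j

lemma minDec_le_minDec {n : ℕ} {R S : Fin n → Set ℝ} {p : Fin n → ℝ} (hpR : p ∈ rectSet R)
    (hpS : p ∈ rectSet S) (h : ∀ q ≤ p, q ∈ rectSet R → q ∈ rectSet S) :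
    minDec S ≤ minDec R := fun i => lowDec_le_lowDec fun a ha => by
  rcases le_total a (p i) with hap | hpa
  · refine ⟨a, ?_, le_rfl⟩
    simpa using h _ (update_le_self_iff.2 hap) (update_mem_rectSet hpR ha) i
  · exact ⟨p i, hpS i, hpa⟩

lemma maxDec_le_maxDec {n : ℕ} {R S : Fin n → Set ℝ} {p : Fin n → ℝ} (hpR : p ∈ rectSet R)
    (hpS : p ∈ rectSet S) (h : ∀ q, p ≤ q → q ∈ rectSet S → q ∈ rectSet R) :
    maxDec S ≤ maxDec R := fun i => highDec_le_highDec fun b hb => by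
  rcases le_total (p i) b with hpb | hbp
  · refine ⟨b, ?_, le_rfl⟩
    simpa using h _ (le_update_self_iff.2 hpb) (update_mem_rectSet hpS hb) i
  · exact ⟨p i, hpR i, hbp⟩

/-- A nonzero morphism `χ : 𝕀^R ⟶ 𝕀^S` between rectangle modules forces
`min_S ≤ min_R` and `max_S ≤ max_R` as decorated points. -/
theorem nonzero_rect_morphism_endpoints
    (k : Type) [Field k] {n : ℕ} (R S : Fin n → Set ℝ)
    (hR : IsRectFactors R) (hS : IsRectFactors S)
    (χ : intervalModule k (rectSet R) (rectSet_convex R fun i => (hR i).2) ⟶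
      intervalModule k (rectSet S) (rectSet_convex S fun i => (hS i).2))
    (hχ : χ ≠ 0) :
    minDec S ≤ minDec R ∧ maxDec S ≤ maxDec R := by
  obtain ⟨p, hχp⟩ : ∃ p, χ.app p ≠ 0 := by
    by_contra! h
    exact hχ (NatTrans.ext (funext h))
  have hpR := mem_source_of_app_ne_zero χ hχp
  have hpS := mem_target_of_app_ne_zero χ hχp
  exact ⟨minDec_le_minDec hpR hpS fun q hqp => mem_target_of_le_of_app_ne_zero χ hχp hqp,
    maxDec_le_maxDec hpR hpS fun q hpq => mem_source_of_le_of_app_ne_zero χ hχp hpq⟩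
end
end
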